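/- Assume (H1), (H3) and (H4). Then for every q ∈ Q and every u₀ ∈ 𝔄(q) there exists exactly one amenable complete trajectory at q passing through u₀ at time 0. -/

import Mathlib

open MeasureTheory Set Bornology Filter Topology RealInnerProductSpace

noncomputable section

variable {Q H : Type*}

section Defs
variable [MetricSpace Q] [NormedAddCommGroup H] [InnerProductSpace ℝ H] [CompleteSpace H]

def IsFlow (ϑ : ℝ → Q → Q) : Prop :=
  (∀ q, ϑ 0 q = q) ∧ (∀ t s q, ϑ (t + s) q = ϑ t (ϑ s q)) ∧
    Continuous fun p : ℝ × Q => ϑ p.1 p.2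

def IsCocycle (ϑ : ℝ → Q → Q) (ψ : ℝ → Q → H → H) : Prop :=
  (∀ q u, ψ 0 q u = u) ∧
  (∀ t s : ℝ, 0 ≤ t → 0 ≤ s → ∀ q u, ψ (t + s) q u = ψ t (ϑ s q) (ψ s q u)) ∧
  ContinuousOn (fun p : ℝ × Q × H => ψ p.1 p.2.1 p.2.2) {p : ℝ × Q × H | 0 ≤ p.1}

def IsCompleteTraj (ϑ : ℝ → Q → Q) (ψ : ℝ → Q → H → H) (q : Q) (u : ℝ → H) : Prop :=
  Continuous u ∧ ∀ t s : ℝ, 0 ≤ t → u (t + s) = ψ t (ϑ s q) (u s)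

def IsAmenable (ν : ℝ) (u : ℝ → H) : Prop :=
  IntegrableOn (fun s : ℝ => Real.exp (2 * ν * s) * ‖u s‖ ^ 2) (Set.Iic (0:ℝ))

def amenSet (ϑ : ℝ → Q → Q) (ψ : ℝ → Q → H → H) (ν : ℝ) (q : Q) : Set H :=
  {u₀ | ∃ u : ℝ → H, IsCompleteTraj ϑ ψ q u ∧ IsAmenable ν u ∧ u 0 = u₀}

structure HypH1 (P : H →L[ℝ] H) (Hplus Hminus : Submodule ℝ H) : Prop where
  selfAdj : IsSelfAdjoint P
  closed_plus : IsClosed (Hplus : Set H)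
  orth : Hminus = Hplusᗮ
  inv_plus : ∀ u ∈ Hplus, P u ∈ Hplus
  inv_minus : ∀ u ∈ Hminus, P u ∈ Hminus
  pos : ∀ u ∈ Hplus, u ≠ 0 → (0:ℝ) < ⟪P u, u⟫
  neg : ∀ u ∈ Hminus, u ≠ 0 → ⟪P u, u⟫ < 0

def HypH2 (Hminus : Submodule ℝ H) (j : ℕ) : Prop :=
  FiniteDimensional ℝ Hminus ∧ Module.finrank ℝ Hminus = j

def HypH3 (ψ : ℝ → Q → H → H) (P : H →L[ℝ] H) (δ ν : ℝ) : Prop :=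
  0 < δ ∧ 0 < ν ∧ ∀ (q : Q) (u v : H) (l r : ℝ), 0 ≤ l → l ≤ r →
    Real.exp (2 * ν * r) * ⟪P (ψ r q u - ψ r q v), ψ r q u - ψ r q v⟫ -
      Real.exp (2 * ν * l) * ⟪P (ψ l q u - ψ l q v), ψ l q u - ψ l q v⟫ ≤
      -δ * ∫ s in l..r, Real.exp (2 * ν * s) * ‖ψ s q u - ψ s q v‖ ^ 2

def IsOrthProjOnto (Hminus : Submodule ℝ H) (Pi : H →L[ℝ] H) : Prop :=
  (∀ u, Pi u ∈ Hminus) ∧ ∀ u, u - Pi u ∈ Hminusᗮ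

def HypCOM2 (ψ : ℝ → Q → H → H) : Prop :=
  ∃ tc : ℝ, 0 < tc ∧ ∀ (q : Q) (s : Set H), IsBounded s → IsCompact (closure (ψ tc q '' s))

def HypCOM3 (ψ : ℝ → Q → H → H) : Prop :=
  ∀ (q : Q) (u₀ : H), IsBounded ((fun t => ψ t q u₀) '' Set.Ici (0:ℝ)) →
    IsCompact (closure ((fun t => ψ t q u₀) '' Set.Ici (0:ℝ)))

def LyapunovStable (ψ : ℝ → Q → H → H) (q : Q) (v : ℝ → H) : Prop :=
  ∀ ε > 0, ∃ η > 0, ∀ u₀ : H, ‖u₀ - v 0‖ < η → ∀ t ≥ 0, ‖ψ t q u₀ - v t‖ < ε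

end Defs

def circleFlow (σ : ℝ) : ℝ → AddCircle σ → AddCircle σ := fun t θ => θ + (t : AddCircle σ)

/-!
Two amenable trajectories through the same point have an amenable difference `w`. By (H3) the
weighted energy `e^{2νt} V(w t)` is nonincreasing and dominates `δ ∫ₜ⁰ e^{2νs} ‖w s‖² ds`
(it vanishes at `t = 0`). Being integrable on `(-∞, 0]`, a nonincreasing function cannot be
positive anywhere there, so `w` vanishes on `(-∞, 0]`; it then vanishes everywhere, since a
complete trajectory is determined by any one of its past values.
-/

theorem AntitoneOn.nonpos_of_integrableOn_Iic {g : ℝ → ℝ} {b : ℝ} (hg : AntitoneOn g (Iic b))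
    (hint : IntegrableOn g (Iic b)) {t : ℝ} (ht : t ≤ b) : g t ≤ 0 := by
  by_contra! hpos
  have hconst : IntegrableOn (fun _ => g t) (Iic t) :=
    (hint.mono_set (Iic_subset_Iic.2 ht)).mono' aestronglyMeasurable_const <|
      (ae_restrict_iff' measurableSet_Iic).2 <| ae_of_all _ fun x (hx : x ≤ t) => by
        rw [Real.norm_of_nonneg hpos.le]
        exact hg (hx.trans ht) ht hx
  simp [integrableOn_const_iff, hpos.ne', Real.volume_Iic] at hconst

theorem eqOn_zero_of_intervalIntegral_nonpos {f : ℝ → ℝ} {a b : ℝ} (hf : Continuous f)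
    (hf0 : 0 ≤ f) (hab : a ≤ b) (h : ∫ x in a..b, f x ≤ 0) : EqOn f 0 (Ioc a b) := by
  have hzero : ∫ x in a..b, f x = 0 :=
    le_antisymm h (intervalIntegral.integral_nonneg hab fun x _ => hf0 x)
  rw [intervalIntegral.integral_eq_zero_iff_of_le_of_nonneg_ae hab (ae_of_all _ hf0)
    (hf.intervalIntegrable a b)] at hzero
  exact Measure.eqOn_Ioc_of_ae_eq volume hzero hf.continuousOn continuousOn_const

section Trajectories

variable [NormedAddCommGroup H] {ϑ : ℝ → Q → Q} {ψ : ℝ → Q → H → H} {q : Q} {u v : ℝ → H}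

def weightedNormSq (ν : ℝ) (w : ℝ → H) (t : ℝ) : ℝ :=
  Real.exp (2 * ν * t) * ‖w t‖ ^ 2

theorem weightedNormSq_nonneg (ν : ℝ) (w : ℝ → H) (t : ℝ) : 0 ≤ weightedNormSq ν w t := by
  unfold weightedNormSq; positivity

theorem Continuous.weightedNormSq {w : ℝ → H} (hw : Continuous w) (ν : ℝ) :
    Continuous (weightedNormSq ν w) := by
  unfold _root_.weightedNormSq; fun_prop

theorem IsAmenable.sub {ν : ℝ} (hu : Continuous u) (hv : Continuous v) (hua : IsAmenable ν u)
    (hva : IsAmenable ν v) : IsAmenable ν (u - v) := by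
  refine ((hua.const_mul 2).add (hva.const_mul 2)).mono'
    ((hu.sub hv).weightedNormSq ν).aestronglyMeasurable (ae_of_all _ fun t => ?_)
  have hsq : ‖u t - v t‖ ^ 2 ≤ 2 * ‖u t‖ ^ 2 + 2 * ‖v t‖ ^ 2 := by
    nlinarith [norm_sub_le (u t) (v t), norm_nonneg (u t - v t), sq_nonneg (‖u t‖ - ‖v t‖)]
  rw [Real.norm_of_nonneg (by positivity), Pi.add_apply, Pi.sub_apply]
  nlinarith [Real.exp_pos (2 * ν * t)]

theorem IsCompleteTraj.eq_of_eqOn_Iic (hu : IsCompleteTraj ϑ ψ q u)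
    (hv : IsCompleteTraj ϑ ψ q v) {s : ℝ} (h : EqOn u v (Iic s)) : u = v := by
  funext t
  have hflow : ∀ w : ℝ → H, IsCompleteTraj ϑ ψ q w →
      w t = ψ (t - min t s) (ϑ (min t s) q) (w (min t s)) := fun w hw => by
    simpa using hw.2 (t - min t s) (min t s) (sub_nonneg.2 (min_le_left t s))
  rw [hflow u hu, hflow v hv, h (min_le_right t s)]

variable [InnerProductSpace ℝ H]

def weightedQuadForm (P : H →L[ℝ] H) (ν : ℝ) (w : ℝ → H) (t : ℝ) : ℝ :=
  Real.exp (2 * ν * t) * ⟪P (w t), w t⟫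

theorem abs_weightedQuadForm_le (P : H →L[ℝ] H) (ν : ℝ) (w : ℝ → H) (t : ℝ) :
    |weightedQuadForm P ν w t| ≤ ‖P‖ * weightedNormSq ν w t := by
  have hV : |⟪P (w t), w t⟫| ≤ ‖P‖ * ‖w t‖ ^ 2 :=
    calc |⟪P (w t), w t⟫| ≤ ‖P (w t)‖ * ‖w t‖ := abs_real_inner_le_norm _ _
      _ ≤ ‖P‖ * ‖w t‖ * ‖w t‖ := by gcongr; exact P.le_opNorm _
      _ = ‖P‖ * ‖w t‖ ^ 2 := by ring
  rw [weightedQuadForm, weightedNormSq, abs_mul, Real.abs_exp, mul_left_comm]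
  gcongr

theorem Continuous.weightedQuadForm {w : ℝ → H} (hw : Continuous w) (P : H →L[ℝ] H) (ν : ℝ) :
    Continuous (weightedQuadForm P ν w) := by
  unfold _root_.weightedQuadForm; fun_prop

variable {P : H →L[ℝ] H} {δ ν : ℝ}

theorem HypH3.weightedQuadForm_sub_le (h3 : HypH3 ψ P δ ν) (hu : IsCompleteTraj ϑ ψ q u)
    (hv : IsCompleteTraj ϑ ψ q v) {a b : ℝ} (hab : a ≤ b) :
    weightedQuadForm P ν (u - v) b - weightedQuadForm P ν (u - v) a ≤
      -δ * ∫ t in a..b, weightedNormSq ν (u - v) t := by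
  have hshift : ∀ w : ℝ → H, IsCompleteTraj ϑ ψ q w → ∀ s, 0 ≤ s →
      ψ s (ϑ a q) (w a) = w (s + a) := fun w hw s hs => (hw.2 s a hs).symm
  have hH3 := h3.2.2 (ϑ a q) (u a) (v a) 0 (b - a) le_rfl (sub_nonneg.2 hab)
  have hint : ∫ s in 0..(b - a),
      Real.exp (2 * ν * s) * ‖ψ s (ϑ a q) (u a) - ψ s (ϑ a q) (v a)‖ ^ 2 =
      Real.exp (-(2 * ν * a)) * ∫ t in a..b, weightedNormSq ν (u - v) t := by
    rw [intervalIntegral.integral_congr (g := fun s =>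
        Real.exp (-(2 * ν * a)) * weightedNormSq ν (u - v) (s + a)),
      intervalIntegral.integral_const_mul, intervalIntegral.integral_comp_add_right]
    · simp
    intro s hs
    rw [uIcc_of_le (sub_nonneg.2 hab)] at hs
    simp only [weightedNormSq, hshift u hu s hs.1, hshift v hv s hs.1, Pi.sub_apply,
      ← mul_assoc, ← Real.exp_add]
    ring_nf
  rw [hint, hshift u hu _ (sub_nonneg.2 hab), hshift v hv _ le_rfl, hshift u hu _ le_rfl,
    hshift v hv _ (sub_nonneg.2 hab), sub_add_cancel, zero_add, mul_zero, Real.exp_zero,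
    one_mul] at hH3
  have hexp : Real.exp (2 * ν * a) * Real.exp (2 * ν * (b - a)) = Real.exp (2 * ν * b) := by
    rw [← Real.exp_add]; ring_nf
  have hinv : Real.exp (2 * ν * a) * Real.exp (-(2 * ν * a)) = 1 := by
    rw [← Real.exp_add, add_neg_cancel, Real.exp_zero]
  simp only [weightedQuadForm, Pi.sub_apply]
  linear_combination Real.exp (2 * ν * a) * hH3 - ⟪P (u b - v b), u b - v b⟫ * hexp -
    δ * (∫ t in a..b, weightedNormSq ν (u - v) t) * hinv

theorem IsCompleteTraj.eq_of_isAmenable (h3 : HypH3 ψ P δ ν) (hu : IsCompleteTraj ϑ ψ q u)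
    (hv : IsCompleteTraj ϑ ψ q v) (hua : IsAmenable ν u) (hva : IsAmenable ν v) (h0 : u 0 = v 0) :
    u = v := by
  have hw : Continuous (u - v) := hu.1.sub hv.1
  have hanti : AntitoneOn (weightedQuadForm P ν (u - v)) (Iic 0) := fun a _ b _ hab => by
    have hI : 0 ≤ ∫ t in a..b, weightedNormSq ν (u - v) t :=
      intervalIntegral.integral_nonneg hab fun t _ => weightedNormSq_nonneg ν (u - v) t
    linarith [h3.weightedQuadForm_sub_le hu hv hab, mul_nonneg h3.1.le hI]
  have hint : IntegrableOn (weightedQuadForm P ν (u - v)) (Iic 0) :=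
    ((hua.sub hu.1 hv.1 hva).const_mul ‖P‖).mono' (hw.weightedQuadForm P ν).aestronglyMeasurable
      (ae_of_all _ (abs_weightedQuadForm_le P ν _))
  have hzero : weightedQuadForm P ν (u - v) 0 = 0 := by simp [weightedQuadForm, h0]
  refine hu.eq_of_eqOn_Iic hv (s := 0) fun t (ht : t ≤ 0) => ?_
  have hI : ∫ s in (t - 1)..0, weightedNormSq ν (u - v) s ≤ 0 := by
    refine nonpos_of_mul_nonpos_right ?_ h3.1
    linarith [h3.weightedQuadForm_sub_le hu hv (a := t - 1) (b := 0) (by linarith),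
      hanti.nonpos_of_integrableOn_Iic hint (t := t - 1) (by linarith), hzero]
  have hnormSq : weightedNormSq ν (u - v) t = 0 :=
    eqOn_zero_of_intervalIntegral_nonpos (hw.weightedNormSq ν)
      (fun s => weightedNormSq_nonneg ν _ s) (by linarith) hI ⟨by linarith, ht⟩
  simpa [weightedNormSq, sub_eq_zero] using hnormSq

end Trajectories

theorem unique_amenable_trajectory_general
    {Q H : Type*} [NormedAddCommGroup H] [InnerProductSpace ℝ H]
    (ϑ : ℝ → Q → Q) (ψ : ℝ → Q → H → H)
    (P : H →L[ℝ] H)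
    (δ ν : ℝ) (h3 : HypH3 ψ P δ ν) :
    ∀ q : Q, ∀ u₀ ∈ amenSet ϑ ψ ν q,
      ∃! u : ℝ → H, IsCompleteTraj ϑ ψ q u ∧ IsAmenable ν u ∧ u 0 = u₀ := by
  rintro q u₀ ⟨u, hu, hua, hu0⟩
  exact ⟨u, ⟨hu, hua, hu0⟩, fun v ⟨hv, hva, hv0⟩ =>
    hv.eq_of_isAmenable h3 hu hva hua (hv0.trans hu0.symm)⟩

/-- Corollary 1: under (H1), (H3) and (H4), through every point of the amenable set
`𝔄(q)` there passes exactly one amenable complete trajectory at `q`. -/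
theorem unique_amenable_trajectory
    {Q H : Type*} [MetricSpace Q] [NormedAddCommGroup H] [InnerProductSpace ℝ H]
    [CompleteSpace H] [TopologicalSpace.SeparableSpace H]
    (ϑ : ℝ → Q → Q) (ψ : ℝ → Q → H → H)
    (hflow : IsFlow ϑ) (hcoc : IsCocycle ϑ ψ)
    (P : H →L[ℝ] H) (Hplus Hminus : Submodule ℝ H)
    (h1 : HypH1 P Hplus Hminus)
    (δ ν : ℝ) (h3 : HypH3 ψ P δ ν)
    (h4 : ∀ q : Q, (amenSet ϑ ψ ν q).Nonempty) :
    ∀ q : Q, ∀ u₀ ∈ amenSet ϑ ψ ν q,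
      ∃! u : ℝ → H, IsCompleteTraj ϑ ψ q u ∧ IsAmenable ν u ∧ u 0 = u₀ :=
  unique_amenable_trajectory_general ϑ ψ P δ ν h3
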